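/- arXiv:1105.4328 — 2 statements merged into one kernel-verified Lean document; each statement's English description precedes it below -/
import Mathlib

section
/- Let r, ε > 0, a = √(rε + ε²/4), p₁ = (−a, 0), p₂ = (a, 0), and h(x) = (1/2π)(log|x − p₁| − log|x − p₂|). Then the gradient of h at the origin is ∇h(0) = (1/(π a), 0); in particular |∇h(0)| = 1/(π√(rε + ε²/4)), and ε^{1/2}·|∇h(0)| → 1/(π√r) as ε → 0. -/
/-! Since `∇ log ‖x - p‖ = (x - p) / ‖x - p‖²`, the two logarithmic poles at `∓q` contribute
equally at their midpoint `0`, so `∇h(0) = (1 / 2π) · 2q / ‖q‖² = q / (π ‖q‖²)`, which is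
`(1 / (π a), 0)` for `q = (a, 0)`. The rate then comes from `√ε / √(rε + ε²/4) = 1 / √(r + ε/4)`. -/

open Real Filter Metric

noncomputable section

abbrev E2 := EuclideanSpace ℝ (Fin 2)

/-- The point (a, b) in ℝ². -/
def pt (a b : ℝ) : E2 := (WithLp.equiv 2 (Fin 2 → ℝ)).symm ![a, b]

/-- Inversion (reflection) across the circle ∂B(c, r). -/
def refl2 (c : E2) (r : ℝ) (x : E2) : E2 := (r ^ 2 / ‖x - c‖ ^ 2) • (x - c) + c
/-- The singular function for two equal disks of radius r at distance ε, with
reflection fixed points p₁ = (−a, 0), p₂ = (a, 0), a = √(rε + ε²/4). -/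
def hsing (r ε : ℝ) (x : E2) : ℝ :=
  (1/(2*π)) * (Real.log ‖x - pt (-Real.sqrt (r*ε + ε^2/4)) 0‖
    - Real.log ‖x - pt (Real.sqrt (r*ε + ε^2/4)) 0‖)

section Gradient

variable {F : Type*} [NormedAddCommGroup F] [InnerProductSpace ℝ F] [CompleteSpace F]
  {f g : F → ℝ} {f' g' x : F}

theorem HasGradientAt.sub (hf : HasGradientAt f f' x) (hg : HasGradientAt g g' x) :
    HasGradientAt (fun y => f y - g y) (f' - g') x := by
  rw [hasGradientAt_iff_hasFDerivAt, map_sub]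
  exact hf.hasFDerivAt.sub hg.hasFDerivAt

theorem HasGradientAt.const_mul (c : ℝ) (hf : HasGradientAt f f' x) :
    HasGradientAt (fun y => c * f y) (c • f') x := by
  rw [hasGradientAt_iff_hasFDerivAt, map_smulₛₗ]
  exact hf.hasFDerivAt.const_mul c

theorem hasGradientAt_log_norm_sub {p : F} (hx : x ≠ p) :
    HasGradientAt (fun y => log ‖y - p‖) ((‖x - p‖ ^ 2)⁻¹ • (x - p)) x := by
  have hne : ‖x - p‖ ^ 2 ≠ 0 := by positivity [sub_ne_zero.2 hx]
  have hsq := ((hasFDerivAt_sub_const (x := x) p).norm_sq.log hne).const_mul (1 / 2 : ℝ)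
  have hlog : (fun y : F => log ‖y - p‖) = fun y => 1 / 2 * log (‖y - p‖ ^ 2) := by
    funext y
    rw [Real.log_pow]
    ring
  rw [hlog, hasGradientAt_iff_hasFDerivAt]
  refine hsq.congr_fderiv ?_
  ext v
  simp only [ContinuousLinearMap.comp_id, smul_apply, coe_innerSL_apply, nsmul_eq_mul,
    Nat.cast_ofNat, smul_eq_mul, map_smul, InnerProductSpace.toDual_apply_apply]
  field_simp

theorem hasGradientAt_zero_log_norm_add_sub_log_norm_sub {q : F} (hq : q ≠ 0) :
    HasGradientAt (fun y => log ‖y - -q‖ - log ‖y - q‖) ((2 / ‖q‖ ^ 2) • q) 0 := by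
  have hplus := hasGradientAt_log_norm_sub (x := 0) (p := -q) (by simpa [eq_comm] using hq)
  have hminus := hasGradientAt_log_norm_sub (x := 0) (p := q) (Ne.symm hq)
  convert hplus.sub hminus using 1
  simp only [zero_sub, neg_neg, norm_neg]
  module

end Gradient

theorem pt_neg (a b : ℝ) : pt (-a) (-b) = -pt a b := by
  ext i; fin_cases i <;> simp [pt]

theorem smul_pt (c a b : ℝ) : c • pt a b = pt (c * a) (c * b) := by
  ext i; fin_cases i <;> simp [pt]

theorem norm_pt (a b : ℝ) : ‖pt a b‖ = √(a ^ 2 + b ^ 2) := by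
  simp [EuclideanSpace.norm_eq, pt, Fin.sum_univ_two]

theorem norm_pt_zero (a : ℝ) : ‖pt a 0‖ = |a| := by
  simp [norm_pt, Real.sqrt_sq_eq_abs]

theorem hasGradientAt_hsing {r ε : ℝ} (h : 0 < r * ε + ε ^ 2 / 4) :
    HasGradientAt (hsing r ε) (pt (1 / (π * √(r * ε + ε ^ 2 / 4))) 0) 0 := by
  set a := √(r * ε + ε ^ 2 / 4)
  have ha : 0 < a := Real.sqrt_pos.2 h
  have hpt : pt a 0 ≠ 0 := by
    rw [← norm_ne_zero_iff, norm_pt_zero]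
    positivity
  have hdipole := (hasGradientAt_zero_log_norm_add_sub_log_norm_sub hpt).const_mul (1 / (2 * π))
  have hneg : pt (-a) 0 = -pt a 0 := by simpa using pt_neg a 0
  convert hdipole using 1
  · funext x
    simp only [hsing, a, hneg]
  · rw [smul_smul, smul_pt, norm_pt_zero, abs_of_pos ha]
    congr 1
    · field_simp
    · ring

theorem tendsto_sqrt_mul_one_div_pi_mul_sqrt {r : ℝ} (hr : 0 < r) :
    Tendsto (fun ε => √ε * (1 / (π * √(r * ε + ε ^ 2 / 4))))
      (nhdsWithin 0 (Set.Ioi 0)) (nhds (1 / (π * √r))) := by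
  have hfactor : ∀ ε : ℝ, 0 < ε →
      √ε * (1 / (π * √(r * ε + ε ^ 2 / 4))) = 1 / (π * √(r + ε / 4)) := by
    intro ε hε
    rw [show r * ε + ε ^ 2 / 4 = ε * (r + ε / 4) by ring, Real.sqrt_mul hε.le]
    field_simp [(Real.sqrt_pos.2 hε).ne']
  have hcont : ContinuousAt (fun ε : ℝ => 1 / (π * √(r + ε / 4))) 0 := by
    refine continuousAt_const.div (by fun_prop) ?_
    simp [pi_ne_zero, (Real.sqrt_pos.2 hr).ne']
  refine Tendsto.congr' (eventually_nhdsWithin_of_forall fun ε hε => (hfactor ε hε).symm) ?_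
  simpa using hcont.tendsto.mono_left nhdsWithin_le_nhds

theorem stmt9 (r : ℝ) (hr : 0 < r) :
    (∀ ε : ℝ, 0 < ε →
      gradient (hsing r ε) 0 = pt (1/(π * Real.sqrt (r*ε + ε^2/4))) 0 ∧
      ‖gradient (hsing r ε) 0‖ = 1/(π * Real.sqrt (r*ε + ε^2/4))) ∧
    Tendsto (fun ε : ℝ => Real.sqrt ε * ‖gradient (hsing r ε) 0‖)
      (nhdsWithin 0 (Set.Ioi 0)) (nhds (1/(π * Real.sqrt r))) := by
  have hgrad : ∀ ε : ℝ, 0 < ε →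
      gradient (hsing r ε) 0 = pt (1 / (π * √(r * ε + ε ^ 2 / 4))) 0 :=
    fun ε hε => (hasGradientAt_hsing (by positivity)).gradient
  have hnorm : ∀ ε : ℝ, 0 < ε →
      ‖gradient (hsing r ε) 0‖ = 1 / (π * √(r * ε + ε ^ 2 / 4)) := by
    intro ε hε
    rw [hgrad ε hε, norm_pt_zero, abs_of_nonneg (by positivity)]
  refine ⟨fun ε hε => ⟨hgrad ε hε, hnorm ε hε⟩, ?_⟩
  refine (tendsto_sqrt_mul_one_div_pi_mul_sqrt hr).congr' ?_
  filter_upwards [self_mem_nhdsWithin] with ε hε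
  rw [hnorm ε hε]
end
end

section
/- Let B₁ = B(c₁, r₁), B₂ = B(c₂, r₂) be disjoint disks in ℝ², and p₁ ∈ B₁, p₂ ∈ B₂ with R₁(p₂) = p₁ and R₂(p₁) = p₂ (R_j the inversion across ∂B_j). Then for every x ∈ ∂B₁, ⟨(x − p₁)^⊥/|x − p₁|² − (x − p₂)^⊥/|x − p₂|² − (x − c₁)^⊥/|x − c₁|², x − c₁⟩ = 0, where (y₁,y₂)^⊥ = (−y₂, y₁). Equivalently, the normal derivative on ∂B₁ of any continuous branch of arg(x − p₁) − arg(x − p₂) − arg(x − c₁) vanishes. -/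
open Real Filter Metric

noncomputable section

/-- Rotation by π/2 : (y₁, y₂)^⊥ = (−y₂, y₁). -/
def perp (x : E2) : E2 := pt (-(x 1)) (x 0)

/-!
For `x` on `∂B(c₁, r₁)` write `u = x - c₁`, `a = p₂ - c₁` and `s = r₁² / ‖a‖²`, so that
`x - p₁ = u - s • a` and `x - p₂ = u - a`. Since `⟪v^⊥, v⟫ = 0`, the numerators satisfy
`⟪(x - p₁)^⊥, u⟫ = s ⟪(x - p₂)^⊥, u⟫`, and since the circle is an Apollonius circle of `p₁, p₂`,
`‖x - p₁‖² = s ‖x - p₂‖²`. Hence the first two terms cancel, and the third vanishes.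
-/

lemma inner_eq_fin_two (y z : E2) : (inner ℝ y z : ℝ) = y 0 * z 0 + y 1 * z 1 := by
  simp [PiLp.inner_apply, Fin.sum_univ_two]; ring

lemma perp_apply_zero (v : E2) : perp v 0 = -v 1 := rfl

lemma perp_apply_one (v : E2) : perp v 1 = v 0 := rfl

lemma inner_perp_self (v : E2) : (inner ℝ (perp v) v : ℝ) = 0 := by
  rw [inner_eq_fin_two, perp_apply_zero, perp_apply_one]; ring

lemma inner_perp_sub_smul_left (u a : E2) (s : ℝ) :
    (inner ℝ (perp (u - s • a)) u : ℝ) = -s * inner ℝ (perp a) u := by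
  simp only [inner_eq_fin_two, perp_apply_zero, perp_apply_one, PiLp.sub_apply, PiLp.smul_apply,
    smul_eq_mul]
  ring

theorem norm_sub_smul_sq_of_norm_eq {V : Type*} [NormedAddCommGroup V] [InnerProductSpace ℝ V]
    {u a : V} {r : ℝ} (hu : ‖u‖ = r) (ha : a ≠ 0) :
    ‖u - (r ^ 2 / ‖a‖ ^ 2) • a‖ ^ 2 = r ^ 2 / ‖a‖ ^ 2 * ‖u - a‖ ^ 2 := by
  have : ‖a‖ ≠ 0 := norm_ne_zero_iff.mpr ha
  rw [norm_sub_sq_real, norm_sub_sq_real, norm_smul, real_inner_smul_right, hu, Real.norm_eq_abs,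
    abs_of_nonneg (by positivity)]
  field_simp
  ring

theorem inner_perp_div_norm_sq_refl2 {c p x : E2} {r : ℝ} (hx : ‖x - c‖ = r) :
    (inner ℝ ((‖x - refl2 c r p‖ ^ 2)⁻¹ • perp (x - refl2 c r p)) (x - c) : ℝ)
      = inner ℝ ((‖x - p‖ ^ 2)⁻¹ • perp (x - p)) (x - c) := by
  set u := x - c
  set a := p - c
  set s := r ^ 2 / ‖a‖ ^ 2
  have hxp' : x - refl2 c r p = u - s • a := by simp only [refl2, u, a, s]; abel
  have hxp : x - p = u - (1 : ℝ) • a := by simp only [u, a, one_smul]; abel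
  rw [hxp', hxp, real_inner_smul_left, real_inner_smul_left, inner_perp_sub_smul_left,
    inner_perp_sub_smul_left]
  -- this case contains the degenerate ones `a = 0` and `r = 0`, where `s = 0`
  by_cases hP : inner ℝ (perp a) u = (0 : ℝ)
  · simp [hP]
  have ha : a ≠ 0 := by
    intro h
    simp [h, inner_eq_fin_two, perp_apply_zero, perp_apply_one] at hP
  have hr : r ≠ 0 := by
    rintro rfl
    rw [norm_eq_zero] at hx
    simp [hx] at hP
  have hs : s ≠ 0 := div_ne_zero (pow_ne_zero _ hr) (pow_ne_zero _ (norm_ne_zero_iff.mpr ha))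
  rw [one_smul, norm_sub_smul_sq_of_norm_eq hx ha, mul_inv]
  linear_combination (-(‖u - a‖ ^ 2)⁻¹ * inner ℝ (perp a) u) * inv_mul_cancel₀ hs

theorem stmt14_general (c₁ : E2) (r₁ : ℝ) (p₁ p₂ : E2) (hR₁ : refl2 c₁ r₁ p₂ = p₁) :
    ∀ x : E2, ‖x - c₁‖ = r₁ →
      (inner ℝ ((‖x - p₁‖ ^ 2)⁻¹ • perp (x - p₁) - (‖x - p₂‖ ^ 2)⁻¹ • perp (x - p₂)
        - (‖x - c₁‖ ^ 2)⁻¹ • perp (x - c₁)) (x - c₁) : ℝ) = 0 := by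
  intro x hx
  subst hR₁
  rw [inner_sub_left, inner_sub_left, inner_perp_div_norm_sq_refl2 hx, real_inner_smul_left,
    real_inner_smul_left, inner_perp_self]
  ring

theorem stmt14 (c₁ c₂ : E2) (r₁ r₂ : ℝ) (hr₁ : 0 < r₁) (hr₂ : 0 < r₂)
    (hdisj : Disjoint (closedBall c₁ r₁) (closedBall c₂ r₂))
    (p₁ p₂ : E2) (hp₁ : p₁ ∈ ball c₁ r₁) (hp₂ : p₂ ∈ ball c₂ r₂)
    (hR₁ : refl2 c₁ r₁ p₂ = p₁) (hR₂ : refl2 c₂ r₂ p₁ = p₂) :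
    ∀ x : E2, ‖x - c₁‖ = r₁ →
      (inner ℝ ((‖x - p₁‖ ^ 2)⁻¹ • perp (x - p₁) - (‖x - p₂‖ ^ 2)⁻¹ • perp (x - p₂)
        - (‖x - c₁‖ ^ 2)⁻¹ • perp (x - c₁)) (x - c₁) : ℝ) = 0 :=
  stmt14_general c₁ r₁ p₁ p₂ hR₁
end
end
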